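/- arXiv:1804.10145 — 11 statements merged into one kernel-verified Lean document; each statement's English description precedes it below -/
import Mathlib

section
/- Let S ⊂ ℤ² be a finite set whose convex hull P ⊂ ℝ² is a two-dimensional polygon, and let N ≥ 3 be an integer. Suppose that the set of interior lattice points of P is exactly {(i,0) : 1 ≤ i ≤ N−1}. Then every lattice point (a,b) ∈ ℤ² lying in P satisfies b ∈ {−1, 0, 1}; that is, all lattice points of P lie on the three consecutive horizontal lines y = −1, y = 0, y = 1. -/
/-!
If a lattice point `(a, b)` of `P` had `|b| ≥ 2`, the triangle with apex `(a, b)` over the base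
`[(1,0), (2,0)]`, which lies in the interior of `P`, would contain a lattice point of height
strictly between `0` and `b`; such a point is interior to `P`, yet off the line `y = 0`.
For `b ≥ 2` the triangle meets the line `y = b - j` in an interval of length `j / b` that
contains an integer as soon as `j * (a - 1) mod b ≤ j`, and such a `j ∈ (0, b)` exists: take
`j` to be an inverse of `a - 1` mod `b` if they are coprime, and `b / gcd (a - 1) b` otherwise.
-/

open Set

def latticeEmbed : ℤ × ℤ → ℝ × ℝ := fun p => ((p.1 : ℝ), (p.2 : ℝ))

theorem Int.exists_mul_emod_le_self (c b : ℤ) (hb : 2 ≤ b) :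
    ∃ j, 0 < j ∧ j < b ∧ j * c % b ≤ j := by
  have hb0 : 0 < b := by omega
  obtain hg | hg := eq_or_ne (Int.gcd c b) 1
  · set j := c.gcdA b % b
    have hinv : j * c % b = 1 := by
      have hbez : c * c.gcdA b + b * c.gcdB b = 1 := by
        rw [← Int.gcd_eq_gcd_ab, hg]; rfl
      have : j * c ≡ 1 [ZMOD b] := calc
        j * c ≡ c.gcdA b * c [ZMOD b] := (Int.mod_modEq _ _).mul_right c
        _ = 1 + b * -c.gcdB b := by linarith
        _ ≡ 1 [ZMOD b] := Int.modEq_iff_dvd.mpr ⟨c.gcdB b, by ring⟩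
      rw [this, Int.emod_eq_of_lt zero_le_one (by omega)]
    have hj0 : j ≠ 0 := fun h => by simp [h] at hinv
    have hjpos : 0 < j := lt_of_le_of_ne (Int.emod_nonneg _ hb0.ne') (Ne.symm hj0)
    exact ⟨j, hjpos, Int.emod_lt_of_pos _ hb0, by omega⟩
  · obtain ⟨j, hj⟩ := Int.gcd_dvd_right c b
    obtain ⟨e, he⟩ := Int.gcd_dvd_left c b
    have hg2 : (2 : ℤ) ≤ Int.gcd c b := by
      have := Int.gcd_pos_of_ne_zero_right c hb0.ne'
      omega
    generalize (Int.gcd c b : ℤ) = g at hj he hg2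
    have hjpos : 0 < j := by nlinarith
    have hkill : j * c % b = 0 := Int.emod_eq_zero_of_dvd ⟨e, by rw [he, hj]; ring⟩
    exact ⟨j, hjpos, by nlinarith, by omega⟩

lemma exists_latticeEmbed_mem_triangle_of_two_le (a b : ℤ) (hb : 2 ≤ b) :
    ∃ p : ℤ × ℤ, p.2 ≠ 0 ∧ ∃ x ∈ Icc (1 : ℝ) 2, ∃ t ∈ Ico (0 : ℝ) 1,
      latticeEmbed p = (1 - t) • ((x, 0) : ℝ × ℝ) + t • latticeEmbed (a, b) := by
  obtain ⟨j, hj0, hjb, hr⟩ := Int.exists_mul_emod_le_self (a - 1) b hb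
  have hr0 : 0 ≤ j * (a - 1) % b := Int.emod_nonneg _ (by omega)
  have hdiv := Int.mul_ediv_add_emod (j * (a - 1)) b
  generalize j * (a - 1) / b = q, j * (a - 1) % b = r at hr hr0 hdiv
  have hjR : (0 : ℝ) < j := by exact_mod_cast hj0
  have hbR : (0 : ℝ) < b := by exact_mod_cast (by omega : (0 : ℤ) < b)
  have hjbR : (j : ℝ) < b := by exact_mod_cast hjb
  have hdivR : (j : ℝ) * (a - 1) = b * q + r := by exact_mod_cast hdiv.symm
  refine ⟨(a - q, b - j), by dsimp only; omega, 1 + r / j, ⟨?_, ?_⟩, (b - j) / b, ⟨?_, ?_⟩, ?_⟩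
  · have : (0 : ℝ) ≤ r / j := div_nonneg (by exact_mod_cast hr0) hjR.le
    linarith
  · have : (r : ℝ) / j ≤ 1 := (div_le_one hjR).mpr (by exact_mod_cast hr)
    linarith
  · exact div_nonneg (by linarith) hbR.le
  · exact (div_lt_one hbR).mpr (by linarith)
  · ext <;> simp only [latticeEmbed, Prod.fst_add, Prod.snd_add, Prod.smul_fst, Prod.smul_snd,
      smul_eq_mul] <;> push_cast <;> field_simp
    · linear_combination (j : ℝ) * hdivR
    · ring

lemma exists_latticeEmbed_mem_triangle (a b : ℤ) (hb : 2 ≤ |b|) :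
    ∃ p : ℤ × ℤ, p.2 ≠ 0 ∧ ∃ x ∈ Icc (1 : ℝ) 2, ∃ t ∈ Ico (0 : ℝ) 1,
      latticeEmbed p = (1 - t) • ((x, 0) : ℝ × ℝ) + t • latticeEmbed (a, b) := by
  rcases le_abs'.mp hb with hb | hb
  · obtain ⟨p, hp, x, hx, t, ht, h⟩ := exists_latticeEmbed_mem_triangle_of_two_le a (-b) (by omega)
    refine ⟨(p.1, -p.2), neg_ne_zero.mpr hp, x, hx, t, ht, ?_⟩
    simp only [latticeEmbed, Prod.ext_iff, Prod.fst_add, Prod.snd_add, Prod.smul_fst,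
      Prod.smul_snd, smul_eq_mul] at h ⊢
    push_cast at h ⊢
    constructor <;> linarith
  · exact exists_latticeEmbed_mem_triangle_of_two_le a b hb

lemma Convex.mk_mem_interior_of_mem_Icc {C : Set (ℝ × ℝ)} (hC : Convex ℝ C) {x₁ x₂ y x : ℝ}
    (h₁ : (x₁, y) ∈ interior C) (h₂ : (x₂, y) ∈ interior C) (hx : x ∈ Icc x₁ x₂) :
    (x, y) ∈ interior C := by
  refine hC.interior.segment_subset h₁ h₂ ?_
  rw [← Prod.image_mk_segment_left, segment_eq_Icc (hx.1.trans hx.2)]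
  exact mem_image_of_mem _ hx

theorem toda_polygon_three_lines_general (S : Finset (ℤ × ℤ)) (N : ℤ) (hN : 3 ≤ N)
    (hint : {p : ℤ × ℤ |
        latticeEmbed p ∈ interior (convexHull ℝ (latticeEmbed '' (S : Set (ℤ × ℤ))))} =
      {p : ℤ × ℤ | 1 ≤ p.1 ∧ p.1 ≤ N - 1 ∧ p.2 = 0}) :
    ∀ p : ℤ × ℤ, latticeEmbed p ∈ convexHull ℝ (latticeEmbed '' (S : Set (ℤ × ℤ))) →
      p.2 = -1 ∨ p.2 = 0 ∨ p.2 = 1 := by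
  set C := convexHull ℝ (latticeEmbed '' (S : Set (ℤ × ℤ)))
  have hC : Convex ℝ C := convex_convexHull ℝ _
  have mem_interior_iff (p : ℤ × ℤ) := Set.ext_iff.mp hint p
  have h₁ := (mem_interior_iff (1, 0)).mpr ⟨le_rfl, by omega, rfl⟩
  have h₂ := (mem_interior_iff (2, 0)).mpr ⟨by norm_num, by omega, rfl⟩
  simp only [mem_ofPred_eq, latticeEmbed, Int.cast_one, Int.cast_ofNat, Int.cast_zero] at h₁ h₂
  intro ⟨a, b⟩ hab
  by_contra hb
  obtain ⟨q, hq, x, hx, t, ht, hqt⟩ := exists_latticeEmbed_mem_triangle a b (by grind)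
  have hqC : latticeEmbed q ∈ interior C := hqt ▸ hC.combo_interior_self_mem_interior
    (hC.mk_mem_interior_of_mem_Icc h₁ h₂ hx) hab (by linarith [ht.2]) ht.1 (by ring)
  exact hq ((mem_interior_iff q).mp hqC).2.2

/-- If the interior lattice points of a (two-dimensional) convex lattice polygon are exactly
`(1,0), …, (N-1,0)` with `N ≥ 3`, then every lattice point of the polygon lies on one of the
three horizontal lines `y = -1`, `y = 0`, `y = 1`. -/
theorem toda_polygon_three_lines (S : Finset (ℤ × ℤ)) (N : ℤ) (hN : 3 ≤ N)
    (hdim : ¬ Collinear ℝ (latticeEmbed '' (S : Set (ℤ × ℤ))))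
    (hint : {p : ℤ × ℤ |
        latticeEmbed p ∈ interior (convexHull ℝ (latticeEmbed '' (S : Set (ℤ × ℤ))))} =
      {p : ℤ × ℤ | 1 ≤ p.1 ∧ p.1 ≤ N - 1 ∧ p.2 = 0}) :
    ∀ p : ℤ × ℤ, latticeEmbed p ∈ convexHull ℝ (latticeEmbed '' (S : Set (ℤ × ℤ))) →
      p.2 = -1 ∨ p.2 = 0 ∨ p.2 = 1 :=
  toda_polygon_three_lines_general S N hN hint
end

section
/- Let N ≥ 1 be a natural number, k an integer, Z a complex number, Q a nonzero complex number, and τ : ℤ × ℤ → ℂ a nowhere-vanishing function satisfying the non-autonomous Hirota bilinear equation τ_{n,m+1}·τ_{n,m−1} = τ_{n,m}² + Z·Q^{kn−Nm}·τ_{n+1,m}·τ_{n−1,m} for all (n,m) ∈ ℤ², together with the boundary condition τ_{n+N,m+k} = τ_{n,m} for all (n,m). Define x_{n,m} := Z·Q^{kn−Nm+N}·τ_{n−1,m−1}·τ_{n+1,m−1}·τ_{n,m−1}^{−2}. Then x satisfies the periodicity x_{n+N,m+k} = x_{n,m} and the Y-system x_{n,m+1}·x_{n,m−1}·(1 + x_{n,m})²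 = x_{n,m}²·(1 + x_{n+1,m})·(1 + x_{n−1,m}) for all (n,m) ∈ ℤ². -/
/-!
The Hirota equation at `(n, m - 1)`, divided by `τ_{n,m-1}²`, says exactly that
`1 + x_{n,m} = τ_{n,m} τ_{n,m-2} / τ_{n,m-1}²`. Substituting this and the definition of `x` into
the Y-system, both sides become the same monomial in the `τ`'s; the powers of `Q` match because
the exponent of `Q` in `x_{n,m}` is affine in `m`.
-/

section HirotaToYSystem

variable {K : Type*} [Field K] (N : ℕ) (k : ℤ) (Z Q : K) (τ : ℤ → ℤ → K)

def yOfTau (n m : ℤ) : K :=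
  Z * Q ^ (k * n - (N : ℤ) * m + (N : ℤ)) *
    τ (n - 1) (m - 1) * τ (n + 1) (m - 1) * ((τ n (m - 1)) ^ 2)⁻¹

variable {N k Z Q τ}

theorem yOfTau_periodic (hper : ∀ n m : ℤ, τ (n + N) (m + k) = τ n m) (n m : ℤ) :
    yOfTau N k Z Q τ (n + N) (m + k) = yOfTau N k Z Q τ n m := by
  have hexp : k * (n + N) - (N : ℤ) * (m + k) + N = k * n - N * m + N := by ring
  rw [yOfTau, yOfTau, hexp, add_sub_right_comm, add_right_comm n, add_sub_right_comm m, hper,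
    hper, hper]

theorem one_add_yOfTau (hτ : ∀ n m : ℤ, τ n m ≠ 0)
    (hHirota : ∀ n m : ℤ, τ n (m + 1) * τ n (m - 1) =
      (τ n m) ^ 2 + Z * Q ^ (k * n - (N : ℤ) * m) * τ (n + 1) m * τ (n - 1) m) (n m : ℤ) :
    1 + yOfTau N k Z Q τ n m = τ n m * τ n (m - 2) * ((τ n (m - 1)) ^ 2)⁻¹ := by
  have hH := hHirota n (m - 1)
  rw [sub_add_cancel, sub_sub, one_add_one_eq_two,
    show k * n - (N : ℤ) * (m - 1) = k * n - N * m + N by ring] at hH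
  rw [yOfTau, hH, add_mul, mul_inv_cancel₀ (pow_ne_zero 2 (hτ n (m - 1)))]
  ring

theorem yOfTau_ysystem (hQ : Q ≠ 0) (hτ : ∀ n m : ℤ, τ n m ≠ 0)
    (hHirota : ∀ n m : ℤ, τ n (m + 1) * τ n (m - 1) =
      (τ n m) ^ 2 + Z * Q ^ (k * n - (N : ℤ) * m) * τ (n + 1) m * τ (n - 1) m) (n m : ℤ) :
    yOfTau N k Z Q τ n (m + 1) * yOfTau N k Z Q τ n (m - 1) * (1 + yOfTau N k Z Q τ n m) ^ 2 =
      yOfTau N k Z Q τ n m ^ 2 * (1 + yOfTau N k Z Q τ (n + 1) m) *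
        (1 + yOfTau N k Z Q τ (n - 1) m) := by
  have hQpow : Q ^ (k * n - (N : ℤ) * (m + 1) + N) * Q ^ (k * n - (N : ℤ) * (m - 1) + N) =
      Q ^ (k * n - (N : ℤ) * m + N) * Q ^ (k * n - (N : ℤ) * m + N) := by
    rw [← zpow_add₀ hQ, ← zpow_add₀ hQ]
    congr 1
    ring
  rw [one_add_yOfTau hτ hHirota, one_add_yOfTau hτ hHirota, one_add_yOfTau hτ hHirota, yOfTau,
    yOfTau, yOfTau, add_sub_cancel_right, sub_sub, one_add_one_eq_two]
  have := hτ n (m - 1); have := hτ n m; have := hτ n (m - 2)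
  have := hτ (n + 1) (m - 1); have := hτ (n - 1) (m - 1)
  field_simp
  linear_combination (Z ^ 2 * τ (n - 1) m * τ (n + 1) m * τ (n - 1) (m - 2) * τ (n + 1) (m - 2)) *
    hQpow

end HirotaToYSystem

theorem hirota_to_Ysystem_general (N : ℕ) (k : ℤ) (Z Q : ℂ) (hQ : Q ≠ 0)
    (τ : ℤ → ℤ → ℂ) (hτ : ∀ n m : ℤ, τ n m ≠ 0)
    (hHirota : ∀ n m : ℤ, τ n (m + 1) * τ n (m - 1) =
      (τ n m) ^ 2 + Z * Q ^ (k * n - (N : ℤ) * m) * τ (n + 1) m * τ (n - 1) m)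
    (hper : ∀ n m : ℤ, τ (n + N) (m + k) = τ n m)
    (x : ℤ → ℤ → ℂ)
    (hx : ∀ n m : ℤ, x n m = Z * Q ^ (k * n - (N : ℤ) * m + (N : ℤ)) *
      τ (n - 1) (m - 1) * τ (n + 1) (m - 1) * ((τ n (m - 1)) ^ 2)⁻¹) :
    (∀ n m : ℤ, x (n + N) (m + k) = x n m) ∧
    (∀ n m : ℤ, x n (m + 1) * x n (m - 1) * (1 + x n m) ^ 2 =
      (x n m) ^ 2 * (1 + x (n + 1) m) * (1 + x (n - 1) m)) := by
  obtain rfl : x = yOfTau N k Z Q τ := funext₂ hx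
  exact ⟨yOfTau_periodic hper, yOfTau_ysystem hQ hτ hHirota⟩

/-- A nowhere-vanishing solution of the non-autonomous Hirota bilinear equation with periodic
boundary conditions gives, via `x_{n,m} = Z·Q^{kn-Nm+N}·τ_{n-1,m-1}·τ_{n+1,m-1}·τ_{n,m-1}^{-2}`,
a periodic solution of the Y-system. -/
theorem hirota_to_Ysystem (N : ℕ) (hN : 1 ≤ N) (k : ℤ) (Z Q : ℂ) (hQ : Q ≠ 0)
    (τ : ℤ → ℤ → ℂ) (hτ : ∀ n m : ℤ, τ n m ≠ 0)
    (hHirota : ∀ n m : ℤ, τ n (m + 1) * τ n (m - 1) =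
      (τ n m) ^ 2 + Z * Q ^ (k * n - (N : ℤ) * m) * τ (n + 1) m * τ (n - 1) m)
    (hper : ∀ n m : ℤ, τ (n + N) (m + k) = τ n m)
    (x : ℤ → ℤ → ℂ)
    (hx : ∀ n m : ℤ, x n m = Z * Q ^ (k * n - (N : ℤ) * m + (N : ℤ)) *
      τ (n - 1) (m - 1) * τ (n + 1) (m - 1) * ((τ n (m - 1)) ^ 2)⁻¹) :
    (∀ n m : ℤ, x (n + N) (m + k) = x n m) ∧
    (∀ n m : ℤ, x n (m + 1) * x n (m - 1) * (1 + x n m) ^ 2 =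
      (x n m) ^ 2 * (1 + x (n + 1) m) * (1 + x (n - 1) m)) :=
  hirota_to_Ysystem_general N k Z Q hQ τ hτ hHirota hper x hx
end

section
/- Let N ≥ 1 be a natural number, k an integer, Z a complex number, Q a nonzero complex number, and τ : ℤ × ℤ → ℂ a nowhere-vanishing function satisfying the non-autonomous Hirota bilinear equation τ_{n,m+1}·τ_{n,m−1} = τ_{n,m}² + Z·Q^{kn−Nm}·τ_{n+1,m}·τ_{n−1,m} for all (n,m) ∈ ℤ². Define x_{n,m} := Z·Q^{kn−Nm+N}·τ_{n−1,m−1}·τ_{n+1,m−1}·τ_{n,m−1}^{−2}. Then for all (n,m) ∈ ℤ² one has 1 + x_{n,m} = τ_{n,m}·τ_{n,m−2}·τ_{n,m−1}^{−2}; in particular 1 + x_{n,m} ≠ 0 for all (n,m). -/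
theorem hirota_one_plus_x_general (N : ℕ) (k : ℤ) (Z Q : ℂ)
    (τ : ℤ → ℤ → ℂ) (hτ : ∀ n m : ℤ, τ n m ≠ 0)
    (hHirota : ∀ n m : ℤ, τ n (m + 1) * τ n (m - 1) =
      (τ n m) ^ 2 + Z * Q ^ (k * n - (N : ℤ) * m) * τ (n + 1) m * τ (n - 1) m)
    (x : ℤ → ℤ → ℂ)
    (hx : ∀ n m : ℤ, x n m = Z * Q ^ (k * n - (N : ℤ) * m + (N : ℤ)) *
      τ (n - 1) (m - 1) * τ (n + 1) (m - 1) * ((τ n (m - 1)) ^ 2)⁻¹) :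
    ∀ n m : ℤ, 1 + x n m = τ n m * τ n (m - 2) * ((τ n (m - 1)) ^ 2)⁻¹ ∧ 1 + x n m ≠ 0 := by
  intro n m
  have hirota_shifted : τ n m * τ n (m - 2) = τ n (m - 1) ^ 2 +
      Z * Q ^ (k * n - (N : ℤ) * m + N) * τ (n + 1) (m - 1) * τ (n - 1) (m - 1) := by
    have h := hHirota n (m - 1)
    rwa [sub_add_cancel, show m - 1 - 1 = m - 2 by ring,
      show k * n - (N : ℤ) * (m - 1) = k * n - N * m + N by ring] at h
  have one_add_x : 1 + x n m = τ n m * τ n (m - 2) * ((τ n (m - 1)) ^ 2)⁻¹ := by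
    rw [hx, hirota_shifted]
    field_simp [hτ n (m - 1)]
  exact ⟨one_add_x, by simp [one_add_x, hτ]⟩

/-- For a nowhere-vanishing solution of the non-autonomous Hirota bilinear equation, the
variables `x_{n,m} = Z·Q^{kn-Nm+N}·τ_{n-1,m-1}·τ_{n+1,m-1}·τ_{n,m-1}^{-2}` satisfy
`1 + x_{n,m} = τ_{n,m}·τ_{n,m-2}·τ_{n,m-1}^{-2}`; in particular `1 + x_{n,m} ≠ 0`. -/
theorem hirota_one_plus_x (N : ℕ) (hN : 1 ≤ N) (k : ℤ) (Z Q : ℂ) (hQ : Q ≠ 0)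
    (τ : ℤ → ℤ → ℂ) (hτ : ∀ n m : ℤ, τ n m ≠ 0)
    (hHirota : ∀ n m : ℤ, τ n (m + 1) * τ n (m - 1) =
      (τ n m) ^ 2 + Z * Q ^ (k * n - (N : ℤ) * m) * τ (n + 1) m * τ (n - 1) m)
    (x : ℤ → ℤ → ℂ)
    (hx : ∀ n m : ℤ, x n m = Z * Q ^ (k * n - (N : ℤ) * m + (N : ℤ)) *
      τ (n - 1) (m - 1) * τ (n + 1) (m - 1) * ((τ n (m - 1)) ^ 2)⁻¹) :
    ∀ n m : ℤ, 1 + x n m = τ n m * τ n (m - 2) * ((τ n (m - 1)) ^ 2)⁻¹ ∧ 1 + x n m ≠ 0 :=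
  hirota_one_plus_x_general N k Z Q τ hτ hHirota x hx
end

section
/- Let x : ℤ × ℤ → ℂ be a function such that for all (n,m) ∈ ℤ², x_{n,m} ≠ 0 and 1 + x_{n,m} ≠ 0, and suppose x satisfies the Y-system x_{n,m+1}·x_{n,m−1}·(1 + x_{n,m})² = x_{n,m}²·(1 + x_{n+1,m})·(1 + x_{n−1,m}) for all (n,m). For α, β ∈ {0,1} define x^{+αβ}_{n,m} := x_{n,m} / ((1 + x_{n−1,m+1})^α · (1 + x_{n+1,m+1})^β) and x^{×αβ}_{n,m} := (1 + x_{n−1,m+1})^α · (1 + x_{n+1,m+1})^β / x_{n,m+2}. Then for all (n,m) ∈ ℤ² and all α, β ∈ {0,1} the following relations hold: (a) x^{+α0}_{n,m} = x^{+α1}_{n,m}·(1 + x_{n+1,m+1}); (b) x^{+0β}_{n,m} = x^{+1β}_{n,m}·(1 + x_{n−1,m+1}); (c) x^{×α1}_{n,m} = x^{×α0}_{n,m}·(1 + x_{n+1,m+1}); (d) x^{×1β}_{n,m} = x^{×0β}_{n,m}·(1 + x_{n−1,m+1}); (e) x^{+αβ}_{n,m}·(1 + x_{n,m+1}^{−1})²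 = x^{×(1−α)(1−β)}_{n,m}. -/
/-- The cluster `X`-variables `x^{+αβ}` and `x^{×αβ}` attached to the polyline-strip quivers,
built from a solution of the Y-system, satisfy the mutation-compatibility relations. -/
theorem Ysystem_cluster_variables_relations (x : ℤ → ℤ → ℂ)
    (hx0 : ∀ n m : ℤ, x n m ≠ 0) (hx1 : ∀ n m : ℤ, 1 + x n m ≠ 0)
    (hY : ∀ n m : ℤ, x n (m + 1) * x n (m - 1) * (1 + x n m) ^ 2 =
      (x n m) ^ 2 * (1 + x (n + 1) m) * (1 + x (n - 1) m))
    (xp xt : ℕ → ℕ → ℤ → ℤ → ℂ)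
    (hxp : ∀ (α β : ℕ) (n m : ℤ), xp α β n m =
      x n m / ((1 + x (n - 1) (m + 1)) ^ α * (1 + x (n + 1) (m + 1)) ^ β))
    (hxt : ∀ (α β : ℕ) (n m : ℤ), xt α β n m =
      (1 + x (n - 1) (m + 1)) ^ α * (1 + x (n + 1) (m + 1)) ^ β / x n (m + 2)) :
    ∀ (n m : ℤ) (α β : ℕ), α ≤ 1 → β ≤ 1 →
      (xp α 0 n m = xp α 1 n m * (1 + x (n + 1) (m + 1))) ∧
      (xp 0 β n m = xp 1 β n m * (1 + x (n - 1) (m + 1))) ∧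
      (xt α 1 n m = xt α 0 n m * (1 + x (n + 1) (m + 1))) ∧
      (xt 1 β n m = xt 0 β n m * (1 + x (n - 1) (m + 1))) ∧
      (xp α β n m * (1 + (x n (m + 1))⁻¹) ^ 2 = xt (1 - α) (1 - β) n m) := by
  intro n m α β hα hβ
  have hY' : x n (m + 2) * x n m * (1 + x n (m + 1)) ^ 2 =
      (x n (m + 1)) ^ 2 * (1 + x (n + 1) (m + 1)) * (1 + x (n - 1) (m + 1)) := by
    have h := hY n (m + 1)
    rw [show m + 1 + 1 = m + 2 by ring, show m + 1 - 1 = m by ring] at h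
    exact h
  have h1 := hx0 n m
  have h2 := hx0 n (m + 1)
  have h3 := hx0 n (m + 2)
  have h4 := hx1 (n - 1) (m + 1)
  have h5 := hx1 (n + 1) (m + 1)
  interval_cases α <;> interval_cases β <;>
    refine ⟨?_, ?_, ?_, ?_, ?_⟩ <;>
    simp only [hxp, hxt, pow_zero, pow_one, one_mul, mul_one] <;>
    field_simp <;>
    ring_nf <;>
    ring_nf at hY' <;>
    linear_combination hY'
end

section
/- Let q ∈ ℂ with 0 < ‖q‖ < 1 and let z ∈ ℂ be such that 1 + z·qⁿ ≠ 0 for all integers n ≥ 0. Then the family (fun n : ℕ ↦ (1 + z·q^{n+1})^{−(n+1)}) is multipliable (and similarly at the arguments qz and q^{−1}z), and the function ψ(u) := ∏_{n=1}^{∞} (1 + u·qⁿ)^{−n} satisfies the functional equation (1 + z)·ψ(q·z)·ψ(q^{−1}·z) = ψ(z)². -/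
/-!
Write `F n = 1 + z qⁿ`. The substitutions `z ↦ qz` and `z ↦ q⁻¹z` shift `F` by one step, so
`ψ(qz) = ∏_{n ≥ 1} F(n)^{-(n-1)}` and `(1 + z) ψ(q⁻¹z) = ∏_{n ≥ 1} F(n)^{-(n+1)}`; multiplying the
two products factorwise gives `∏_{n ≥ 1} F(n)^{-2n} = ψ(z)²`. All products involved converge
absolutely because the exponents grow linearly while `F n - 1` decays geometrically, so the
series of exponent times `log F(n)` converges absolutely.
-/

/-- The reciprocal double q-Pochhammer symbol `ψ(u) = 1/(-qu; q, q)_∞ = ∏_{n=1}^∞ (1 + u·qⁿ)^{-n}`. -/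
noncomputable def qPochDoubleInv (q u : ℂ) : ℂ := ∏' n : ℕ, (1 + u * q ^ (n + 1)) ^ (-(n + 1 : ℤ))

open Filter Topology

namespace Complex

lemma summable_mul_log_one_add {ι : Type*} {c a : ι → ℂ}
    (hca : Summable fun i => ‖c i‖ * ‖a i‖) (ha : Tendsto a cofinite (𝓝 0)) :
    Summable fun i => c i * log (1 + a i) := by
  refine (hca.mul_left (3 / 2)).of_norm_bounded_eventually ?_
  filter_upwards [(tendsto_zero_iff_norm_tendsto_zero.mp ha).eventually_le_const one_half_pos]
    with i hi
  calc ‖c i * log (1 + a i)‖ = ‖c i‖ * ‖log (1 + a i)‖ := norm_mul _ _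
    _ ≤ ‖c i‖ * (3 / 2 * ‖a i‖) := by gcongr; exact norm_log_one_add_half_le_self hi
    _ = 3 / 2 * (‖c i‖ * ‖a i‖) := by ring

lemma multipliable_zpow_of_summable_mul_log {ι : Type*} {f : ι → ℂ} {e : ι → ℤ}
    (hf : ∀ i, f i ≠ 0) (h : Summable fun i => (e i : ℂ) * log (f i)) :
    Multipliable fun i => f i ^ e i :=
  h.hasSum.cexp.multipliable.congr fun i => by simp [exp_int_mul, exp_log (hf i)]

end Complex

lemma multipliable_one_add_mul_pow_zpow {q w : ℂ} (hq : ‖q‖ < 1) {k : ℕ}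
    (hw : ∀ n, 1 + w * q ^ (n + k) ≠ 0) {e : ℕ → ℤ} {C : ℤ} (he : ∀ n, |e n| ≤ n + C) :
    Multipliable fun n => (1 + w * q ^ (n + k)) ^ e n := by
  refine Complex.multipliable_zpow_of_summable_mul_log hw
    (Complex.summable_mul_log_one_add ?_ ?_)
  · have hgeom : Summable fun n : ℕ => ((n : ℝ) + C) * ‖q‖ ^ n := by
      simpa [add_mul] using (summable_pow_mul_geometric_of_norm_lt_one 1 (by simpa using hq)).add
        ((summable_geometric_of_lt_one (norm_nonneg q) hq).mul_left (C : ℝ))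
    refine (hgeom.mul_left (‖w‖ * ‖q‖ ^ k)).of_nonneg_of_le (fun n => by positivity) fun n => ?_
    have hen : ‖(e n : ℂ)‖ ≤ n + C := by
      rw [Complex.norm_intCast]; exact_mod_cast he n
    calc ‖(e n : ℂ)‖ * ‖w * q ^ (n + k)‖ ≤ (n + C) * ‖w * q ^ (n + k)‖ := by gcongr
      _ = ‖w‖ * ‖q‖ ^ k * ((n + C) * ‖q‖ ^ n) := by rw [norm_mul, norm_pow, pow_add]; ring
  · rw [Nat.cofinite_eq_atTop]
    simpa using ((tendsto_pow_atTop_nhds_zero_of_norm_lt_one hq).comp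
      (tendsto_add_atTop_nat k)).const_mul w

lemma multipliable_one_add_mul_pow_zpow_neg {q w : ℂ} (hq : ‖q‖ < 1) {k : ℕ}
    (hw : ∀ n, 1 + w * q ^ (n + k) ≠ 0) (c : ℤ) :
    Multipliable fun n : ℕ => (1 + w * q ^ (n + k)) ^ (-((n : ℤ) + c)) :=
  multipliable_one_add_mul_pow_zpow hq hw (C := |c|) fun n => by
    rw [abs_neg]; exact (abs_add_le _ _).trans (by simp)

section GroupWithZero

variable {G₀ : Type*} [CommGroupWithZero G₀]

lemma zpow_neg_mul_zpow_neg_add_two (a : G₀) (n : ℕ) :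
    a ^ (-(n : ℤ)) * a ^ (-(n + 2 : ℤ)) = (a ^ (-(n + 1 : ℤ))) ^ 2 := by
  -- the exponents do not sum to zero, so no `a ≠ 0` is needed
  rw [← zpow_add' (Or.inr (Or.inl (by omega))), ← zpow_natCast, ← zpow_mul]
  ring_nf

theorem mul_tprod_mul_tprod_eq_sq [TopologicalSpace G₀] [ContinuousMul G₀] [T2Space G₀]
    {F : ℕ → G₀} (hF : F 0 ≠ 0)
    (hA : Multipliable fun n : ℕ => F (n + 1) ^ (-(n + 1 : ℤ)))
    (hB : Multipliable fun n : ℕ => F (n + 2) ^ (-(n + 1 : ℤ)))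
    (hC : Multipliable fun n : ℕ => F (n + 1) ^ (-(n + 2 : ℤ))) :
    F 0 * (∏' n : ℕ, F (n + 2) ^ (-(n + 1 : ℤ))) * ∏' n : ℕ, F n ^ (-(n + 1 : ℤ)) =
      (∏' n : ℕ, F (n + 1) ^ (-(n + 1 : ℤ))) ^ 2 := by
  have hD : HasProd (fun n : ℕ => F (n + 1) ^ (-(n : ℤ)))
      (∏' n : ℕ, F (n + 2) ^ (-(n + 1 : ℤ))) := by
    simpa using hB.hasProd.prod_range_mul (f := fun n : ℕ => F (n + 1) ^ (-(n : ℤ))) (k := 1)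
  have hshift :
      F 0 * ∏' n : ℕ, F n ^ (-(n + 1 : ℤ)) = ∏' n : ℕ, F (n + 1) ^ (-(n + 2 : ℤ)) := by
    rw [tprod_eq_zero_mul' (by simpa [add_assoc] using hC)]
    simp [add_assoc, hF]
  calc F 0 * (∏' n : ℕ, F (n + 2) ^ (-(n + 1 : ℤ))) * ∏' n : ℕ, F n ^ (-(n + 1 : ℤ))
      = (∏' n : ℕ, F (n + 1) ^ (-(n : ℤ))) * ∏' n : ℕ, F (n + 1) ^ (-(n + 2 : ℤ)) := by
        rw [mul_right_comm, hshift, hD.tprod_eq, mul_comm]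
    _ = ∏' n : ℕ, (F (n + 1) ^ (-(n + 1 : ℤ))) ^ 2 := by
        rw [← hD.multipliable.tprod_mul hC]
        exact tprod_congr fun n => zpow_neg_mul_zpow_neg_add_two _ n
    _ = (∏' n : ℕ, F (n + 1) ^ (-(n + 1 : ℤ))) ^ 2 := by
        simp_rw [sq, hA.tprod_mul hA]

end GroupWithZero

/-- For `0 < ‖q‖ < 1` and `1 + z·qⁿ ≠ 0` for all `n ≥ 0`, the products defining
`ψ(z)`, `ψ(qz)`, `ψ(q⁻¹z)` are multipliable and `ψ` satisfies
`(1 + z)·ψ(qz)·ψ(q⁻¹z) = ψ(z)²`. -/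
theorem qPochDoubleInv_multipliable_and_bilinear (q z : ℂ) (hq0 : 0 < ‖q‖) (hq1 : ‖q‖ < 1)
    (hz : ∀ n : ℕ, 1 + z * q ^ n ≠ 0) :
    Multipliable (fun n : ℕ => (1 + z * q ^ (n + 1)) ^ (-(n + 1 : ℤ))) ∧
    Multipliable (fun n : ℕ => (1 + (q * z) * q ^ (n + 1)) ^ (-(n + 1 : ℤ))) ∧
    Multipliable (fun n : ℕ => (1 + (q⁻¹ * z) * q ^ (n + 1)) ^ (-(n + 1 : ℤ))) ∧
    (1 + z) * qPochDoubleInv q (q * z) * qPochDoubleInv q (q⁻¹ * z) =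
      (qPochDoubleInv q z) ^ 2 := by
  have hq : q ≠ 0 := norm_pos_iff.mp hq0
  have hqz (n : ℕ) : 1 + q * z * q ^ (n + 1) = 1 + z * q ^ (n + 2) := by ring
  have hq'z (n : ℕ) : 1 + q⁻¹ * z * q ^ (n + 1) = 1 + z * q ^ n := by field_simp; ring
  have hψ_qz : qPochDoubleInv q (q * z) = ∏' n : ℕ, (1 + z * q ^ (n + 2)) ^ (-(n + 1 : ℤ)) :=
    tprod_congr fun n => by rw [hqz]
  have hψ_q'z : qPochDoubleInv q (q⁻¹ * z) = ∏' n : ℕ, (1 + z * q ^ n) ^ (-(n + 1 : ℤ)) :=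
    tprod_congr fun n => by rw [hq'z]
  refine ⟨multipliable_one_add_mul_pow_zpow_neg hq1 (fun n => hz _) 1,
    multipliable_one_add_mul_pow_zpow_neg hq1 (fun n => hqz n ▸ hz _) 1,
    multipliable_one_add_mul_pow_zpow_neg hq1 (fun n => hq'z n ▸ hz _) 1, ?_⟩
  rw [hψ_qz, hψ_q'z]
  simpa only [qPochDoubleInv, pow_zero, mul_one] using
    mul_tprod_mul_tprod_eq_sq (F := fun n => 1 + z * q ^ n) (hz 0)
    (multipliable_one_add_mul_pow_zpow_neg hq1 (fun n => hz _) 1)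
    (multipliable_one_add_mul_pow_zpow_neg hq1 (fun n => hz _) 1)
    (multipliable_one_add_mul_pow_zpow_neg hq1 (fun n => hz _) 2)
end

section
/- Let p ∈ ℂ with ‖p‖ < 1, define θ₃(x) := ∑_{n ∈ ℤ} p^{n²}·exp(2·n·x·i) and θ̃₁(x) := ∑_{n ∈ ℤ} (−1)ⁿ·p^{n²+n}·exp((2n+1)·x·i), and let Z, U ∈ ℂ with θ₃(0) ≠ 0 and θ₃(U) ≠ 0. Set w := θ̃₁(U)/θ₃(U), and for m ∈ ℤ define a_m := (θ₃(0)/θ₃(U))^{m²}·θ₃(Z + mU) and b_m := (θ₃(0)/θ₃(U))^{m²}·θ̃₁(Z + mU) (with natural-number power m²). Then for all m ∈ ℤ: a_{m+1}·a_{m−1} = a_m² + p·w²·b_m² and b_{m+1}·b_{m−1} = b_m² − w²·a_m². -/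
/-!
Splitting the double series of `θ(x + y) θ(x - y)` according to the parity of `n + m` and
substituting `(n, m) = (k + l, k - l)` or `(k + l + 1, k - l)` factors each half into theta
functions of nome `p²` at `2x` and `2y` (Watson's identities). Eliminating these between the
identities at `(x, y)`, `(x, 0)`, `(y, 0)` and `(0, 0)` gives the addition formulas
`θ₃(x+y) θ₃(x-y) θ₃(0)² = θ₃(x)² θ₃(y)² + p θ̃₁(x)² θ̃₁(y)²`
and `θ̃₁(x+y) θ̃₁(x-y) θ₃(0)² = θ̃₁(x)² θ₃(y)² - θ₃(x)² θ̃₁(y)²`.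
At `x = Z + mU`, `y = U` these are the Hirota equations, the gauge factor
`(θ₃(0)/θ₃(U))^{m²}` contributing `(θ₃(0)/θ₃(U))²` through `(m+1)² + (m-1)² = 2m² + 2`.
-/


/-- The Jacobi theta function `θ₃(x) = ∑_{n ∈ ℤ} p^{n²}·e^{2nxi}` with nome `p`. -/
noncomputable def jacobiTheta3 (p x : ℂ) : ℂ :=
  ∑' n : ℤ, p ^ (n ^ 2).toNat * Complex.exp (2 * (n : ℂ) * x * Complex.I)

/-- The renormalized first Jacobi theta function
`θ̃₁(x) = ∑_{n ∈ ℤ} (-1)ⁿ·p^{n²+n}·e^{(2n+1)xi}` with nome `p`. -/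
noncomputable def jacobiTheta1t (p x : ℂ) : ℂ :=
  ∑' n : ℤ, (-1 : ℂ) ^ n * p ^ (n ^ 2 + n).toNat *
    Complex.exp ((2 * (n : ℂ) + 1) * x * Complex.I)

open Complex
open scoped Real

def Int.prodEquivSumParity : (ℤ × ℤ) ⊕ (ℤ × ℤ) ≃ ℤ × ℤ where
  toFun
    | .inl (k, l) => (k + l, k - l)
    | .inr (k, l) => (k + l + 1, k - l)
  invFun nm :=
    if (nm.1 + nm.2) % 2 = 0 then .inl ((nm.1 + nm.2) / 2, (nm.1 - nm.2) / 2)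
    else .inr ((nm.1 + nm.2 - 1) / 2, (nm.1 - nm.2 - 1) / 2)
  left_inv := by
    rintro (⟨k, l⟩ | ⟨k, l⟩) <;> dsimp only
    · rw [if_pos (by omega)]; congr 2 <;> omega
    · rw [if_neg (by omega)]; congr 2 <;> omega
  right_inv := by
    rintro ⟨n, m⟩
    dsimp only
    split_ifs <;> ext <;> dsimp only <;> omega

theorem tsum_mul_tsum_eq_parity_split {R : Type*} [NormedRing R] [CompleteSpace R]
    {f g : ℤ → R} (hf : Summable fun n => ‖f n‖) (hg : Summable fun n => ‖g n‖) :
    (∑' n, f n) * (∑' n, g n) = ∑' kl : ℤ × ℤ, f (kl.1 + kl.2) * g (kl.1 - kl.2) +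
      ∑' kl : ℤ × ℤ, f (kl.1 + kl.2 + 1) * g (kl.1 - kl.2) := by
  let F : ℤ × ℤ → R := fun nm => f nm.1 * g nm.2
  have hF : Summable (F ∘ Int.prodEquivSumParity) :=
    Int.prodEquivSumParity.summable_iff.mpr (summable_mul_of_summable_norm hf hg)
  rw [tsum_mul_tsum_of_summable_norm hf hg, ← Int.prodEquivSumParity.tsum_eq]
  exact Summable.tsum_sum (hF.comp_injective Sum.inl_injective)
    (hF.comp_injective Sum.inr_injective)

theorem sq_add_self_nonneg (n : ℤ) : 0 ≤ n ^ 2 + n := by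
  nlinarith [sq_nonneg (2 * n + 1)]

theorem sq_pow_toNat {M : Type*} [Monoid M] (p : M) {i : ℤ} (hi : 0 ≤ i) :
    (p ^ 2) ^ i.toNat = p ^ (2 * i).toNat := by
  rw [← pow_mul, show (2 * i).toNat = 2 * i.toNat by omega]

theorem pow_toNat_sq_add_one_mul_pow_toNat_sq_sub_one {M : Type*} [Monoid M] (c : M) (m : ℤ) :
    c ^ ((m + 1) ^ 2).toNat * c ^ ((m - 1) ^ 2).toNat = (c ^ (m ^ 2).toNat) ^ 2 * c ^ 2 := by
  rw [← pow_add, ← pow_mul, ← pow_add]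
  congr 1
  zify [Int.toNat_of_nonneg, sq_nonneg]
  ring

theorem pow_toNat_mul_cexp_mul {p : ℂ} {i j : ℤ} (hi : 0 ≤ i) (hj : 0 ≤ j) (u v : ℂ) :
    p ^ i.toNat * cexp u * (p ^ j.toNat * cexp v) = p ^ (i + j).toNat * cexp (u + v) := by
  rw [Int.toNat_add hi hj, pow_add, exp_add]
  ring

theorem summable_pow_toNat_mul_cexp {p : ℂ} (hp : ‖p‖ < 1) {b : ℤ}
    (hb : ∀ n : ℤ, 0 ≤ n ^ 2 + b * n) (z : ℂ) :
    Summable fun n : ℤ => p ^ (n ^ 2 + b * n).toNat * cexp (n * z) := by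
  rcases eq_or_ne p 0 with rfl | hp₀
  · refine summable_of_hasFiniteSupport <| ((Set.finite_singleton 0).insert (-b)).subset ?_
    intro n hn
    have hn₀ : n ^ 2 + b * n = 0 := by
      by_contra h
      exact hn (by dsimp only; rw [zero_pow (by have := hb n; omega), zero_mul])
    rcases mul_eq_zero.mp (show n * (n + b) = 0 by linear_combination hn₀) with h | h
    · exact Or.inr h
    · exact Or.inl (by omega)
  · set τ := log p / (π * I) with hτ_def
    have hτ : 0 < τ.im := by
      have : τ.im = -Real.log ‖p‖ / π := by
        simp [τ, div_eq_mul_inv, log_re]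
      rw [this]
      exact div_pos (neg_pos.mpr (Real.log_neg (norm_pos_iff.mpr hp₀) hp)) Real.pi_pos
    refine ((summable_jacobiTheta₂_term_iff ((b * log p + z) / (2 * π * I)) τ).mpr hτ).congr
      fun n => ?_
    rw [jacobiTheta₂_term, ← exp_log hp₀, ← exp_nat_mul, ← exp_add, exp_log hp₀]
    congr 1
    have : ((n ^ 2 + b * n).toNat : ℂ) = n ^ 2 + b * n := by
      exact_mod_cast Int.toNat_of_nonneg (hb n)
    rw [this, hτ_def]
    field_simp [Real.pi_ne_zero, I_ne_zero]
    ring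

noncomputable def jacobiTheta3Term (p x : ℂ) (n : ℤ) : ℂ :=
  p ^ (n ^ 2).toNat * cexp (2 * n * x * I)

noncomputable def jacobiTheta1tTerm (p x : ℂ) (n : ℤ) : ℂ :=
  (-1 : ℂ) ^ n * p ^ (n ^ 2 + n).toNat * cexp ((2 * n + 1) * x * I)

noncomputable def jacobiTheta2tTerm (p x : ℂ) (n : ℤ) : ℂ :=
  p ^ (n ^ 2 + n).toNat * cexp ((2 * n + 1) * x * I)

/-- The renormalized second Jacobi theta function, `θ₂(x) = p^{1/4} θ̃₂(x)`. -/
noncomputable def jacobiTheta2t (p x : ℂ) : ℂ :=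
  ∑' n : ℤ, jacobiTheta2tTerm p x n

theorem summable_norm_jacobiTheta3Term {p : ℂ} (hp : ‖p‖ < 1) (x : ℂ) :
    Summable fun n => ‖jacobiTheta3Term p x n‖ := by
  refine (summable_pow_toNat_mul_cexp hp (b := 0) (fun n => by simpa using sq_nonneg n)
    (2 * x * I)).norm.congr fun n => ?_
  simp only [jacobiTheta3Term, zero_mul, add_zero]
  ring_nf

theorem summable_norm_jacobiTheta2tTerm {p : ℂ} (hp : ‖p‖ < 1) (x : ℂ) :
    Summable fun n => ‖jacobiTheta2tTerm p x n‖ := by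
  refine ((summable_pow_toNat_mul_cexp hp (b := 1) (fun n => by simpa using sq_add_self_nonneg n)
    (2 * x * I)).mul_left (cexp (x * I))).norm.congr fun n => ?_
  rw [jacobiTheta2tTerm, one_mul, mul_left_comm, ← exp_add]
  ring_nf

theorem summable_norm_jacobiTheta1tTerm {p : ℂ} (hp : ‖p‖ < 1) (x : ℂ) :
    Summable fun n => ‖jacobiTheta1tTerm p x n‖ :=
  (summable_norm_jacobiTheta2tTerm hp x).congr fun n => by
    simp [jacobiTheta1tTerm, jacobiTheta2tTerm, norm_zpow]

section Duplication

variable (p x y : ℂ) (k l : ℤ)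

theorem jacobiTheta3Term_add_mul_sub :
    jacobiTheta3Term p (x + y) (k + l) * jacobiTheta3Term p (x - y) (k - l) =
      jacobiTheta3Term (p ^ 2) (2 * x) k * jacobiTheta3Term (p ^ 2) (2 * y) l := by
  simp only [jacobiTheta3Term]
  rw [sq_pow_toNat _ (sq_nonneg k), sq_pow_toNat _ (sq_nonneg l),
    pow_toNat_mul_cexp_mul (sq_nonneg _) (sq_nonneg _),
    pow_toNat_mul_cexp_mul (by positivity) (by positivity)]
  congr 2
  · congr 1; ring
  · push_cast; ring

theorem jacobiTheta3Term_add_add_one_mul_sub :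
    jacobiTheta3Term p (x + y) (k + l + 1) * jacobiTheta3Term p (x - y) (k - l) =
      p * (jacobiTheta2tTerm (p ^ 2) (2 * x) k * jacobiTheta2tTerm (p ^ 2) (2 * y) l) := by
  have hk := sq_add_self_nonneg k
  have hl := sq_add_self_nonneg l
  have hexp : ((k + l + 1) ^ 2 + (k - l) ^ 2).toNat =
      (2 * (k ^ 2 + k) + 2 * (l ^ 2 + l)).toNat + 1 := by
    rw [show (k + l + 1) ^ 2 + (k - l) ^ 2 = 2 * (k ^ 2 + k) + 2 * (l ^ 2 + l) + 1 by ring]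
    exact Int.toNat_add_nat (by positivity) 1
  simp only [jacobiTheta3Term, jacobiTheta2tTerm]
  rw [sq_pow_toNat _ hk, sq_pow_toNat _ hl,
    pow_toNat_mul_cexp_mul (sq_nonneg _) (sq_nonneg _),
    pow_toNat_mul_cexp_mul (by positivity) (by positivity),
    hexp, pow_succ', mul_assoc]
  congr 3
  push_cast; ring

theorem jacobiTheta1tTerm_eq_neg_one_zpow_mul (n : ℤ) :
    jacobiTheta1tTerm p x n = (-1) ^ n * jacobiTheta2tTerm p x n :=
  mul_assoc _ _ _

theorem jacobiTheta1tTerm_add_mul_sub :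
    jacobiTheta1tTerm p (x + y) (k + l) * jacobiTheta1tTerm p (x - y) (k - l) =
      jacobiTheta2tTerm (p ^ 2) (2 * x) k * jacobiTheta3Term (p ^ 2) (2 * y) l := by
  have hsign : (-1 : ℂ) ^ (k + l) * (-1) ^ (k - l) = 1 := by
    rw [← zpow_add₀ (by norm_num)]
    exact Even.neg_one_zpow ⟨k, by ring⟩
  rw [jacobiTheta1tTerm_eq_neg_one_zpow_mul, jacobiTheta1tTerm_eq_neg_one_zpow_mul,
    mul_mul_mul_comm, hsign, one_mul]
  simp only [jacobiTheta2tTerm, jacobiTheta3Term]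
  rw [sq_pow_toNat _ (sq_add_self_nonneg k), sq_pow_toNat _ (sq_nonneg l),
    pow_toNat_mul_cexp_mul (sq_add_self_nonneg _) (sq_add_self_nonneg _),
    pow_toNat_mul_cexp_mul (by nlinarith [sq_add_self_nonneg k]) (by positivity)]
  congr 2
  · congr 1; ring
  · push_cast; ring

theorem jacobiTheta1tTerm_add_add_one_mul_sub :
    jacobiTheta1tTerm p (x + y) (k + l + 1) * jacobiTheta1tTerm p (x - y) (k - l) =
      -(jacobiTheta3Term (p ^ 2) (2 * x) (k + 1) * jacobiTheta2tTerm (p ^ 2) (2 * y) l) := by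
  have hsign : (-1 : ℂ) ^ (k + l + 1) * (-1) ^ (k - l) = -1 := by
    rw [← zpow_add₀ (by norm_num)]
    exact Odd.neg_one_zpow ⟨k, by ring⟩
  rw [jacobiTheta1tTerm_eq_neg_one_zpow_mul, jacobiTheta1tTerm_eq_neg_one_zpow_mul,
    mul_mul_mul_comm, hsign, neg_one_mul]
  simp only [jacobiTheta2tTerm, jacobiTheta3Term]
  rw [sq_pow_toNat _ (sq_nonneg (k + 1)), sq_pow_toNat _ (sq_add_self_nonneg l),
    pow_toNat_mul_cexp_mul (sq_add_self_nonneg _) (sq_add_self_nonneg _),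
    pow_toNat_mul_cexp_mul (by positivity) (by nlinarith [sq_add_self_nonneg l])]
  congr 3
  · congr 1; ring
  · push_cast; ring

end Duplication

theorem jacobiTheta3_add_mul_sub_eq_nome_sq {p : ℂ} (hp : ‖p‖ < 1) (x y : ℂ) :
    jacobiTheta3 p (x + y) * jacobiTheta3 p (x - y) =
      jacobiTheta3 (p ^ 2) (2 * x) * jacobiTheta3 (p ^ 2) (2 * y) +
        p * (jacobiTheta2t (p ^ 2) (2 * x) * jacobiTheta2t (p ^ 2) (2 * y)) := by
  have hp₂ : ‖p ^ 2‖ < 1 :=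
    (norm_pow p 2).trans_lt (pow_lt_one₀ (norm_nonneg p) hp two_ne_zero)
  change (∑' n, jacobiTheta3Term p (x + y) n) * (∑' n, jacobiTheta3Term p (x - y) n) = _
  rw [tsum_mul_tsum_eq_parity_split (summable_norm_jacobiTheta3Term hp _)
      (summable_norm_jacobiTheta3Term hp _)]
  simp_rw [jacobiTheta3Term_add_mul_sub, jacobiTheta3Term_add_add_one_mul_sub]
  rw [tsum_mul_left, ← tsum_mul_tsum_of_summable_norm (summable_norm_jacobiTheta3Term hp₂ _)
      (summable_norm_jacobiTheta3Term hp₂ _),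
    ← tsum_mul_tsum_of_summable_norm (summable_norm_jacobiTheta2tTerm hp₂ _)
      (summable_norm_jacobiTheta2tTerm hp₂ _)]
  rfl

theorem jacobiTheta1t_add_mul_sub_eq_nome_sq {p : ℂ} (hp : ‖p‖ < 1) (x y : ℂ) :
    jacobiTheta1t p (x + y) * jacobiTheta1t p (x - y) =
      jacobiTheta2t (p ^ 2) (2 * x) * jacobiTheta3 (p ^ 2) (2 * y) -
        jacobiTheta3 (p ^ 2) (2 * x) * jacobiTheta2t (p ^ 2) (2 * y) := by
  have hp₂ : ‖p ^ 2‖ < 1 :=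
    (norm_pow p 2).trans_lt (pow_lt_one₀ (norm_nonneg p) hp two_ne_zero)
  have hshift : Summable fun k => ‖jacobiTheta3Term (p ^ 2) (2 * x) (k + 1)‖ :=
    (summable_norm_jacobiTheta3Term hp₂ _).comp_injective (add_left_injective 1)
  change (∑' n, jacobiTheta1tTerm p (x + y) n) * (∑' n, jacobiTheta1tTerm p (x - y) n) = _
  rw [tsum_mul_tsum_eq_parity_split (summable_norm_jacobiTheta1tTerm hp _)
      (summable_norm_jacobiTheta1tTerm hp _)]
  simp_rw [jacobiTheta1tTerm_add_mul_sub, jacobiTheta1tTerm_add_add_one_mul_sub]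
  rw [tsum_neg, ← tsum_mul_tsum_of_summable_norm (summable_norm_jacobiTheta2tTerm hp₂ _)
      (summable_norm_jacobiTheta3Term hp₂ _),
    ← tsum_mul_tsum_of_summable_norm hshift (summable_norm_jacobiTheta2tTerm hp₂ _),
    ← sub_eq_add_neg]
  congr 2
  exact (Equiv.addRight 1).tsum_eq _

theorem jacobiTheta3_sq_eq_nome_sq {p : ℂ} (hp : ‖p‖ < 1) (x : ℂ) :
    jacobiTheta3 p x ^ 2 = jacobiTheta3 (p ^ 2) (2 * x) * jacobiTheta3 (p ^ 2) 0 +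
      p * (jacobiTheta2t (p ^ 2) (2 * x) * jacobiTheta2t (p ^ 2) 0) := by
  simpa only [add_zero, sub_zero, mul_zero, sq] using jacobiTheta3_add_mul_sub_eq_nome_sq hp x 0

theorem jacobiTheta1t_sq_eq_nome_sq {p : ℂ} (hp : ‖p‖ < 1) (x : ℂ) :
    jacobiTheta1t p x ^ 2 = jacobiTheta2t (p ^ 2) (2 * x) * jacobiTheta3 (p ^ 2) 0 -
      jacobiTheta3 (p ^ 2) (2 * x) * jacobiTheta2t (p ^ 2) 0 := by
  simpa only [add_zero, sub_zero, mul_zero, sq] using jacobiTheta1t_add_mul_sub_eq_nome_sq hp x 0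

theorem jacobiTheta3_add_mul_sub_mul_sq {p : ℂ} (hp : ‖p‖ < 1) (x y : ℂ) :
    jacobiTheta3 p (x + y) * jacobiTheta3 p (x - y) * jacobiTheta3 p 0 ^ 2 =
      jacobiTheta3 p x ^ 2 * jacobiTheta3 p y ^ 2 +
        p * (jacobiTheta1t p x ^ 2 * jacobiTheta1t p y ^ 2) := by
  have h₀ := jacobiTheta3_sq_eq_nome_sq hp 0
  rw [mul_zero] at h₀
  rw [jacobiTheta3_add_mul_sub_eq_nome_sq hp, h₀, jacobiTheta3_sq_eq_nome_sq hp x,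
    jacobiTheta3_sq_eq_nome_sq hp y, jacobiTheta1t_sq_eq_nome_sq hp x,
    jacobiTheta1t_sq_eq_nome_sq hp y]
  ring

theorem jacobiTheta1t_add_mul_sub_mul_sq {p : ℂ} (hp : ‖p‖ < 1) (x y : ℂ) :
    jacobiTheta1t p (x + y) * jacobiTheta1t p (x - y) * jacobiTheta3 p 0 ^ 2 =
      jacobiTheta1t p x ^ 2 * jacobiTheta3 p y ^ 2 -
        jacobiTheta3 p x ^ 2 * jacobiTheta1t p y ^ 2 := by
  have h₀ := jacobiTheta3_sq_eq_nome_sq hp 0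
  rw [mul_zero] at h₀
  rw [jacobiTheta1t_add_mul_sub_eq_nome_sq hp, h₀, jacobiTheta3_sq_eq_nome_sq hp x,
    jacobiTheta3_sq_eq_nome_sq hp y, jacobiTheta1t_sq_eq_nome_sq hp x,
    jacobiTheta1t_sq_eq_nome_sq hp y]
  ring

theorem theta_solves_Y20_hirota_general (p : ℂ) (hp : ‖p‖ < 1) (Z U : ℂ)
    (hU : jacobiTheta3 p U ≠ 0)
    (w : ℂ) (hw : w = jacobiTheta1t p U / jacobiTheta3 p U)
    (a b : ℤ → ℂ)
    (ha : ∀ m : ℤ, a m = (jacobiTheta3 p 0 / jacobiTheta3 p U) ^ (m ^ 2).toNat *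
      jacobiTheta3 p (Z + (m : ℂ) * U))
    (hb : ∀ m : ℤ, b m = (jacobiTheta3 p 0 / jacobiTheta3 p U) ^ (m ^ 2).toNat *
      jacobiTheta1t p (Z + (m : ℂ) * U)) :
    ∀ m : ℤ, a (m + 1) * a (m - 1) = a m ^ 2 + p * w ^ 2 * b m ^ 2 ∧
      b (m + 1) * b (m - 1) = b m ^ 2 - w ^ 2 * a m ^ 2 := by
  intro m
  set C := jacobiTheta3 p 0 / jacobiTheta3 p U
  set X := Z + (m : ℂ) * U
  have hX_succ : Z + ((m + 1 : ℤ) : ℂ) * U = X + U := by push_cast; ring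
  have hX_pred : Z + ((m - 1 : ℤ) : ℂ) * U = X - U := by push_cast; ring
  have hC := pow_toNat_sq_add_one_mul_pow_toNat_sq_sub_one C m
  have h₃ : C ^ 2 * (jacobiTheta3 p (X + U) * jacobiTheta3 p (X - U)) =
      jacobiTheta3 p X ^ 2 + p * w ^ 2 * jacobiTheta1t p X ^ 2 := by
    rw [hw, div_pow, div_pow]
    field_simp
    linear_combination jacobiTheta3_add_mul_sub_mul_sq hp X U
  have h₁ : C ^ 2 * (jacobiTheta1t p (X + U) * jacobiTheta1t p (X - U)) =
      jacobiTheta1t p X ^ 2 - w ^ 2 * jacobiTheta3 p X ^ 2 := by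
    rw [hw, div_pow, div_pow]
    field_simp
    linear_combination jacobiTheta1t_add_mul_sub_mul_sq hp X U
  rw [ha, ha, ha, hb, hb, hb, hX_succ, hX_pred]
  constructor
  · linear_combination jacobiTheta3 p (X + U) * jacobiTheta3 p (X - U) * hC +
      (C ^ (m ^ 2).toNat) ^ 2 * h₃
  · linear_combination jacobiTheta1t p (X + U) * jacobiTheta1t p (X - U) * hC +
      (C ^ (m ^ 2).toNat) ^ 2 * h₁

/-- The theta functions `a_m = (θ₃(0)/θ₃(U))^{m²}·θ₃(Z+mU)` and
`b_m = (θ₃(0)/θ₃(U))^{m²}·θ̃₁(Z+mU)` solve the autonomous Hirota equations of the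
`Y^{2,0}` relativistic Toda system. -/
theorem theta_solves_Y20_hirota (p : ℂ) (hp : ‖p‖ < 1) (Z U : ℂ)
    (h0 : jacobiTheta3 p 0 ≠ 0) (hU : jacobiTheta3 p U ≠ 0)
    (w : ℂ) (hw : w = jacobiTheta1t p U / jacobiTheta3 p U)
    (a b : ℤ → ℂ)
    (ha : ∀ m : ℤ, a m = (jacobiTheta3 p 0 / jacobiTheta3 p U) ^ (m ^ 2).toNat *
      jacobiTheta3 p (Z + (m : ℂ) * U))
    (hb : ∀ m : ℤ, b m = (jacobiTheta3 p 0 / jacobiTheta3 p U) ^ (m ^ 2).toNat *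
      jacobiTheta1t p (Z + (m : ℂ) * U)) :
    ∀ m : ℤ, a (m + 1) * a (m - 1) = a m ^ 2 + p * w ^ 2 * b m ^ 2 ∧
      b (m + 1) * b (m - 1) = b m ^ 2 - w ^ 2 * a m ^ 2 :=
  theta_solves_Y20_hirota_general p hp Z U hU w hw a b ha hb
end

section
/- Let z ∈ ℂ and let g : ℤ → ℂ be a nowhere-vanishing function satisfying g_{m+1}·g_{m−1}·(g_m² + 1) = g_m² + z for all m ∈ ℤ. Define H_m := g_m·g_{m−1} + g_m/g_{m−1} + g_{m−1}/g_m + z/(g_m·g_{m−1}). Then H_{m+1} = H_m for all m ∈ ℤ; that is, H is an integral of motion of the recurrence. -/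
/-! The difference of consecutive values of the Hamiltonian factors as
`(g_{m+1} - g_{m-1})` times the defect `g_{m+1} g_{m-1} (g_m² + 1) - (g_m² + z)` of the
recurrence, divided by `g_{m-1} g_m g_{m+1}`; the recurrence makes the defect vanish. -/

section Y20

variable {K : Type*} [Field K]

def y20Hamiltonian (z x y : K) : K :=
  x * y + x / y + y / x + z / (x * y)

theorem y20Hamiltonian_sub_y20Hamiltonian (z : K) {a b c : K} (ha : a ≠ 0) (hb : b ≠ 0)
    (hc : c ≠ 0) :
    y20Hamiltonian z c b - y20Hamiltonian z b a =
      (c - a) * (c * a * (b ^ 2 + 1) - (b ^ 2 + z)) / (a * b * c) := by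
  unfold y20Hamiltonian
  field_simp
  ring

theorem y20Hamiltonian_eq_of_rec (z : K) {a b c : K} (ha : a ≠ 0) (hb : b ≠ 0) (hc : c ≠ 0)
    (hrec : c * a * (b ^ 2 + 1) = b ^ 2 + z) :
    y20Hamiltonian z c b = y20Hamiltonian z b a := by
  rw [← sub_eq_zero, y20Hamiltonian_sub_y20Hamiltonian z ha hb hc, hrec, sub_self,
    mul_zero, zero_div]

end Y20

/-- The Hamiltonian `H_m = g_m·g_{m−1} + g_m/g_{m−1} + g_{m−1}/g_m + z/(g_m·g_{m−1})` is an
integral of motion of the recurrence `g_{m+1}·g_{m−1}·(g_m² + 1) = g_m² + z`. -/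
theorem Y20_hamiltonian_conserved (z : ℂ) (g : ℤ → ℂ) (hg : ∀ m : ℤ, g m ≠ 0)
    (hrec : ∀ m : ℤ, g (m + 1) * g (m - 1) * ((g m) ^ 2 + 1) = (g m) ^ 2 + z)
    (H : ℤ → ℂ)
    (hH : ∀ m : ℤ, H m = g m * g (m - 1) + g m / g (m - 1) + g (m - 1) / g m +
      z / (g m * g (m - 1))) :
    ∀ m : ℤ, H (m + 1) = H m := by
  intro m
  have hH' : ∀ n, H n = y20Hamiltonian z (g n) (g (n - 1)) := hH
  rw [hH', hH', add_sub_cancel_right]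
  exact y20Hamiltonian_eq_of_rec z (hg (m - 1)) (hg m) (hg (m + 1)) (hrec m)
end

section
/- Let u ∈ ℂ and let τ⁰, τ¹ : ℤ → ℂ be nowhere-vanishing functions satisfying the coupled bilinear equations τ⁰_{m+1}·τ⁰_{m−1} = (τ⁰_m)² + u·(τ¹_m)² and τ¹_{m+1}·τ¹_{m−1} = (τ¹_m)² + u·(τ⁰_m)² for all m ∈ ℤ. Define G_m := u·(τ¹_m)²/(τ⁰_m)². Then for all m ∈ ℤ: G_{m+1}·G_{m−1}·(G_m + 1)² = (G_m + u²)². -/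
/-!
Write `a = τ⁰_m`, `b = τ¹_m`. The Hirota equations turn `G_{m+1} G_{m-1}` into
`u² (b² + u a²)² / (a² + u b²)²`, while `G_m + 1 = (a² + u b²) / a²` and
`G_m + u² = u (b² + u a²) / a²`; the flow equation is then an identity of rational functions.
-/

section ClusterFlow

variable {K : Type*} [Field K]

theorem cluster_mul_cluster (u a₁ a₂ b₁ b₂ : K) :
    u * b₁ ^ 2 / a₁ ^ 2 * (u * b₂ ^ 2 / a₂ ^ 2) = u ^ 2 * (b₁ * b₂) ^ 2 / (a₁ * a₂) ^ 2 := by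
  ring

theorem cluster_add_one {u a : K} (b : K) (ha : a ≠ 0) :
    u * b ^ 2 / a ^ 2 + 1 = (a ^ 2 + u * b ^ 2) / a ^ 2 := by
  field_simp
  ring

theorem cluster_add_sq {u a : K} (b : K) (ha : a ≠ 0) :
    u * b ^ 2 / a ^ 2 + u ^ 2 = u * (b ^ 2 + u * a ^ 2) / a ^ 2 := by
  field_simp

theorem cluster_flow_of_hirota {u a b p q : K} (ha : a ≠ 0) (hp₀ : p ≠ 0)
    (hp : p = a ^ 2 + u * b ^ 2) (hq : q = b ^ 2 + u * a ^ 2) :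
    u ^ 2 * q ^ 2 / p ^ 2 * (u * b ^ 2 / a ^ 2 + 1) ^ 2 = (u * b ^ 2 / a ^ 2 + u ^ 2) ^ 2 := by
  rw [cluster_add_one b ha, cluster_add_sq b ha, ← hp, ← hq]
  field_simp

end ClusterFlow

theorem Y20_hirota_to_cluster_flow_general (u : ℂ) (τ0 τ1 : ℤ → ℂ)
    (h0 : ∀ m : ℤ, τ0 m ≠ 0)
    (hrec0 : ∀ m : ℤ, τ0 (m + 1) * τ0 (m - 1) = (τ0 m) ^ 2 + u * (τ1 m) ^ 2)
    (hrec1 : ∀ m : ℤ, τ1 (m + 1) * τ1 (m - 1) = (τ1 m) ^ 2 + u * (τ0 m) ^ 2)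
    (G : ℤ → ℂ) (hG : ∀ m : ℤ, G m = u * (τ1 m) ^ 2 / (τ0 m) ^ 2) :
    ∀ m : ℤ, G (m + 1) * G (m - 1) * (G m + 1) ^ 2 = (G m + u ^ 2) ^ 2 := by
  intro m
  rw [hG, hG, hG, cluster_mul_cluster]
  exact cluster_flow_of_hirota (h0 m) (mul_ne_zero (h0 _) (h0 _)) (hrec0 m) (hrec1 m)

/-- From the coupled autonomous Hirota equations of the `Y^{2,0}` system, the cluster
variable `G_m = u·(τ¹_m)²/(τ⁰_m)²` satisfies the autonomous cluster flow equation
`G_{m+1}·G_{m−1}·(G_m + 1)² = (G_m + u²)²`. -/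
theorem Y20_hirota_to_cluster_flow (u : ℂ) (τ0 τ1 : ℤ → ℂ)
    (h0 : ∀ m : ℤ, τ0 m ≠ 0) (h1 : ∀ m : ℤ, τ1 m ≠ 0)
    (hrec0 : ∀ m : ℤ, τ0 (m + 1) * τ0 (m - 1) = (τ0 m) ^ 2 + u * (τ1 m) ^ 2)
    (hrec1 : ∀ m : ℤ, τ1 (m + 1) * τ1 (m - 1) = (τ1 m) ^ 2 + u * (τ0 m) ^ 2)
    (G : ℤ → ℂ) (hG : ∀ m : ℤ, G m = u * (τ1 m) ^ 2 / (τ0 m) ^ 2) :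
    ∀ m : ℤ, G (m + 1) * G (m - 1) * (G m + 1) ^ 2 = (G m + u ^ 2) ^ 2 :=
  Y20_hirota_to_cluster_flow_general u τ0 τ1 h0 hrec0 hrec1 G hG
end

section
/- Let a ∈ ℂ with a³ ≠ 1, and let A, B, C : ℤ/3ℤ → ℂ with C_j ≠ 0 for all j. Suppose that for every j ∈ ℤ/3ℤ the bilinear relation A_j·C_j = (1 − a³)·B_j² + a·A_{j+1}·C_{j−1} holds. Then for every j ∈ ℤ/3ℤ the trilinear relation A_j·C_j·C_{j+1} = C_{j+1}·B_j² + a·C_{j+2}·B_{j+1}² + a²·C_j·B_{j+2}² holds. -/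
/-- Solving the `Y^{3,3}` bilinear system by Cramer's rule: the bilinear relations
`A_j·C_j = (1 − a³)·B_j² + a·A_{j+1}·C_{j−1}` imply the trilinear relations
`A_j·C_j·C_{j+1} = C_{j+1}·B_j² + a·C_{j+2}·B_{j+1}² + a²·C_j·B_{j+2}²`. -/
theorem Y33_bilinear_to_trilinear (a : ℂ) (ha : a ^ 3 ≠ 1)
    (A B C : ZMod 3 → ℂ) (hC : ∀ j : ZMod 3, C j ≠ 0)
    (hbil : ∀ j : ZMod 3, A j * C j = (1 - a ^ 3) * (B j) ^ 2 + a * A (j + 1) * C (j - 1)) :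
    ∀ j : ZMod 3, A j * C j * C (j + 1) =
      C (j + 1) * (B j) ^ 2 + a * C (j + 2) * (B (j + 1)) ^ 2 +
        a ^ 2 * C j * (B (j + 2)) ^ 2 := by
  intro j
  have e1 : j + 1 + 1 = j + 2 := by ring
  have e2 : j + 2 + 1 = j := by
    have h3 : (3 : ZMod 3) = 0 := rfl
    calc j + 2 + 1 = j + 3 := by ring
    _ = j := by rw [h3, add_zero]
  have e3 : j + 1 - 1 = j := by ring
  have e4 : j + 2 - 1 = j + 1 := by ring
  have e5 : j - 1 = j + 2 := by
    have h3 : (3 : ZMod 3) = 0 := rfl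
    calc j - 1 = j + 2 - 3 := by ring
    _ = j + 2 := by rw [h3, sub_zero]
  have h0 := hbil j
  have h1 := hbil (j + 1)
  have h2 := hbil (j + 2)
  rw [e1, e3] at h1
  rw [e2, e4] at h2
  rw [e5] at h0
  have key : (1 - a ^ 3) *
      (A j * C j * C (j + 1) -
        (C (j + 1) * (B j) ^ 2 + a * C (j + 2) * (B (j + 1)) ^ 2 +
          a ^ 2 * C j * (B (j + 2)) ^ 2)) = 0 := by
    linear_combination C (j + 1) * h0 + a * C (j + 2) * h1 + a ^ 2 * C j * h2
  rcases mul_eq_zero.mp key with h | h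
  · exact absurd (by linear_combination -h) ha
  · linear_combination h
end

section
/- Let q ∈ ℂ with 0 < ‖q‖ < 1, let z, u ∈ ℂ with u² = z, and let A, B, C : ℤ/2ℤ → ℂ satisfy, for each j ∈ ℤ/2ℤ, the bilinear relation A_j·C_j = B_j² − u·A_{j+1}·C_{j+1}. Then: (i) for each j, (1 − z)·A_j·C_j = B_j² − u·B_{j+1}²; and (ii) with φ(x) := ∏_{n=1}^{∞}(1 − x·qⁿ)ⁿ, the dressed values Ã_j := φ(q·z)·A_j, B̃_j := φ(z)·B_j, C̃_j := φ(q^{−1}·z)·C_j satisfy Ã_j·C̃_j = B̃_j² − u·B̃_{j+1}² for each j ∈ ℤ/2ℤ. -/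
/-- The double q-Pochhammer symbol `φ(u) = (qu; q, q)_∞ = ∏_{n=1}^∞ (1 - u·qⁿ)ⁿ`. -/
noncomputable def qPochDouble (q u : ℂ) : ℂ := ∏' n : ℕ, (1 - u * q ^ (n + 1)) ^ (n + 1)

/-!
Part (i) is the `Y^{2,2}` relation at `j` minus `u` times the relation at `j + 1`, using
`j + 1 + 1 = j` in `ℤ/2ℤ`. Part (ii) follows from (i) and `φ(qz)·φ(q⁻¹z) = (1 - z)·φ(z)²`:
with `aₙ = 1 - zqⁿ` the three products are `∏ aₙ₊₂ⁿ⁺¹`, `∏ aₙⁿ⁺¹` and `∏ aₙ₊₁ⁿ⁺¹`, and after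
re-indexing the exponents of `aₘ` on the left add up to `2m` (and to `1` for `a₀`).
-/

open Finset

section ShiftedPowers

variable {M : Type*} [CommMonoid M] [TopologicalSpace M] [T2Space M] [ContinuousMul M]

lemma tprod_pow_shift_two_mul_tprod_pow (a : ℕ → M)
    (h : ∀ k c : ℕ, Multipliable fun n => a (n + k) ^ (n + c)) :
    (∏' n, a (n + 2) ^ (n + 1)) * ∏' n, a n ^ (n + 1) = a 0 * (∏' n, a (n + 1) ^ (n + 1)) ^ 2 := by
  have hshift : ∏' n, a (n + 1) ^ n = ∏' n, a (n + 2) ^ (n + 1) := by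
    simpa using tprod_eq_zero_mul' (f := fun n => a (n + 1) ^ n) (h 2 1)
  have hsplit : ∏' n, a n ^ (n + 1) = a 0 * ∏' n, a (n + 1) ^ (n + 2) := by
    simpa using tprod_eq_zero_mul' (f := fun n => a n ^ (n + 1)) (h 1 2)
  have hmul : (∏' n, a (n + 1) ^ n) * ∏' n, a (n + 1) ^ (n + 2) =
      ∏' n, (a (n + 1) ^ (n + 1)) ^ 2 := by
    rw [← (show Multipliable fun n => a (n + 1) ^ n by simpa using h 1 0).tprod_mul (h 1 2)]
    congr 1; funext n
    rw [← pow_add, ← pow_mul]; congr 1; ring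
  rw [← hshift, hsplit, mul_left_comm, hmul, (h 1 1).tprod_pow]

end ShiftedPowers

/-- `(1 - wqⁿ)^(n+c)` is the product over the fibre at `n` of the absolutely convergent family
`1 - wq^p.1` indexed by `Σ n, Fin (n + c)`, so no logarithms or zero-factor cases are needed. -/
lemma multipliable_one_sub_mul_pow_pow {w q : ℂ} (hq : ‖q‖ < 1) (c : ℕ) :
    Multipliable fun n : ℕ => (1 - w * q ^ n) ^ (n + c) := by
  have hsigma : Summable fun p : (Σ n : ℕ, Fin (n + c)) => -(w * q ^ p.1) := by
    refine Summable.of_norm ?_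
    rw [summable_sigma_of_nonneg fun _ => norm_nonneg _]
    refine ⟨fun _ => Summable.of_finite, ?_⟩
    simp only [tsum_fintype, sum_const, card_univ, Fintype.card_fin, nsmul_eq_mul, norm_neg,
      norm_mul, norm_pow, Nat.cast_add]
    have hgeom : Summable fun n : ℕ => ‖q‖ ^ n := summable_geometric_of_lt_one (norm_nonneg q) hq
    have hn : Summable fun n : ℕ => (n : ℝ) ^ 1 * ‖q‖ ^ n :=
      summable_pow_mul_geometric_of_norm_lt_one 1 (by simpa using hq)
    refine ((hn.add (hgeom.mul_left (c : ℝ))).mul_left ‖w‖).congr fun n => ?_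
    ring
  obtain ⟨P, hP⟩ := Complex.multipliable_one_add_of_summable hsigma
  refine ⟨P, hP.sigma fun n => ?_⟩
  convert hasProd_fintype (fun _ : Fin (n + c) => 1 + -(w * q ^ n)) using 1
  simp [← sub_eq_add_neg]

lemma qPochDouble_mul_qPochDouble {q : ℂ} (hq0 : q ≠ 0) (hq1 : ‖q‖ < 1) (z : ℂ) :
    qPochDouble q (q * z) * qPochDouble q (q⁻¹ * z) = (1 - z) * qPochDouble q z ^ 2 := by
  have key := tprod_pow_shift_two_mul_tprod_pow (fun n => 1 - z * q ^ n) fun k c => by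
    convert multipliable_one_sub_mul_pow_pow (w := z * q ^ k) hq1 c using 4; ring
  simp only [pow_zero, mul_one] at key
  convert key using 3 <;> unfold qPochDouble <;> congr 1 <;> funext n <;> congr 2
  · ring
  · field_simp; ring

lemma bilinear_Y20_of_Y22 {R : Type*} [CommRing R] {u : R} {A B C : ZMod 2 → R}
    (hbil : ∀ j, A j * C j = B j ^ 2 - u * A (j + 1) * C (j + 1)) (j : ZMod 2) :
    (1 - u ^ 2) * (A j * C j) = B j ^ 2 - u * B (j + 1) ^ 2 := by
  have hinv : j + 1 + 1 = j := by grind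
  have hnext := hbil (j + 1)
  rw [hinv] at hnext
  linear_combination hbil j - u * hnext

/-- Equivalence of the `Y^{2,2}` and `Y^{2,0}` bilinear equations: from the `Y^{2,2}`
relations `A_j·C_j = B_j² − u·A_{j+1}·C_{j+1}` one deduces
(i) `(1 − z)·A_j·C_j = B_j² − u·B_{j+1}²`, and (ii) the dressed tau-functions
`Ã_j = φ(qz)A_j`, `B̃_j = φ(z)B_j`, `C̃_j = φ(q⁻¹z)C_j` satisfy the `Y^{2,0}` relations
`Ã_j·C̃_j = B̃_j² − u·B̃_{j+1}²`. -/
theorem Y22_equals_Y20 (q z u : ℂ) (hq0 : 0 < ‖q‖) (hq1 : ‖q‖ < 1) (hu : u ^ 2 = z)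
    (A B C : ZMod 2 → ℂ)
    (hbil : ∀ j : ZMod 2, A j * C j = (B j) ^ 2 - u * A (j + 1) * C (j + 1))
    (tA tB tC : ZMod 2 → ℂ)
    (htA : ∀ j : ZMod 2, tA j = qPochDouble q (q * z) * A j)
    (htB : ∀ j : ZMod 2, tB j = qPochDouble q z * B j)
    (htC : ∀ j : ZMod 2, tC j = qPochDouble q (q⁻¹ * z) * C j) :
    (∀ j : ZMod 2, (1 - z) * (A j * C j) = (B j) ^ 2 - u * (B (j + 1)) ^ 2) ∧
    (∀ j : ZMod 2, tA j * tC j = (tB j) ^ 2 - u * (tB (j + 1)) ^ 2) := by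
  subst hu
  have hY20 := bilinear_Y20_of_Y22 hbil
  have hφ := qPochDouble_mul_qPochDouble (norm_pos_iff.mp hq0) hq1 (u ^ 2)
  refine ⟨hY20, fun j => ?_⟩
  rw [htA, htB, htB, htC]
  linear_combination A j * C j * hφ + qPochDouble q (u ^ 2) ^ 2 * hY20 j
end

section
/- Let N ≥ 1 be a natural number, Z ∈ ℂ, and Q ∈ ℂ with 0 < ‖Q‖ < 1, and suppose 1 + Z·Q^j ≠ 0 for all j ∈ ℤ. For l ∈ ℤ define σ_l := ∏_{n=1}^{∞} (1 + Z·Q^{l+nN})^{−n} (the product is multipliable since ‖Q^N‖ < 1). Then for all l ∈ ℤ: (1 + Z·Q^l)·σ_{l+N}·σ_{l−N} = σ_l². Consequently, the constant-in-j family σ_{j,l} := σ_l (j ∈ ℤ/Nℤ) solves the Y^{N,N} bilinear system σ_{j,l+N}·σ_{j,l−N} = σ_{j,l}² − Z·Q^l·σ_{j+1,l+N}·σ_{j−1,l−N}. -/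
/-!
Writing `b m = log (1 + Z Q^{l + mN})`, the product `σ_{l + kN}` is `exp (-∑ (n+1) b (n+1+k))`
for `k = -1, 0, 1` (the log-sums converge since `b m = O(‖Q^N‖^m)`).  The three weight sequences
differ by a shift, and since the weights are linear in `n` their second difference vanishes except
for the boundary term `b 0 = log (1 + Z Q^l)`, which is the recursion after exponentiating.
-/

/-- The j-independent twisted-field tau-function
`σ_l = ∏_{n=1}^∞ (1 + Z·Q^{l+nN})^{−n}` of the `Y^{N,N}` system. -/
noncomputable def twistTauYNN (N : ℕ) (Z Q : ℂ) (l : ℤ) : ℂ :=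
  ∏' n : ℕ, (1 + Z * Q ^ (l + (n + 1) * (N : ℤ))) ^ (-(n + 1 : ℤ))

open Filter Topology Complex

theorem tsum_succ_nsmul_add_tsum_succ_nsmul_add_two {α : Type*} [AddCommGroup α]
    [TopologicalSpace α] [IsTopologicalAddGroup α] [T2Space α] {b : ℕ → α}
    (h₀ : Summable fun n => (n + 1) • b n) (h₁ : Summable fun n => (n + 1) • b (n + 1))
    (h₂ : Summable fun n => (n + 1) • b (n + 2)) :
    (∑' n, (n + 1) • b n) + ∑' n, (n + 1) • b (n + 2) = b 0 + 2 • ∑' n, (n + 1) • b (n + 1) := by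
  have hshift : Summable fun n => n • b (n + 1) := (summable_nat_add_iff 1).1 h₂
  have hhead : ∑' n, (n + 1) • b n = b 0 + ∑' n, (n + 2) • b (n + 1) := by
    simpa using h₀.tsum_eq_zero_add
  have htail : ∑' n, (n + 1) • b (n + 2) = ∑' n, n • b (n + 1) := by
    simpa using hshift.tsum_eq_zero_add.symm
  rw [hhead, htail, add_assoc, ← ((summable_nat_add_iff 1).2 h₀).tsum_add hshift, two_nsmul,
    ← h₁.tsum_add h₁]
  congr 1
  refine tsum_congr fun n => ?_
  rw [← add_nsmul, ← add_nsmul]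
  congr 1
  omega

theorem Complex.hasProd_zpow_of_hasSum_mul_log {ι : Type*} {a : ι → ℂ} {k : ι → ℤ} {s : ℂ}
    (ha : ∀ i, a i ≠ 0) (h : HasSum (fun i => k i * log (a i)) s) :
    HasProd (fun i => a i ^ k i) (exp s) :=
  h.cexp.congr (by simp [exp_int_mul, exp_log, ha])

theorem Complex.summable_mul_log_one_add_s17 {ι : Type*} {w u : ι → ℂ}
    (hwu : Summable fun i => ‖w i‖ * ‖u i‖) (hu : Tendsto u cofinite (𝓝 0)) :
    Summable fun i => w i * log (1 + u i) := by
  refine (hwu.mul_left (3 / 2)).of_norm_bounded_eventually ?_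
  have hsmall : ∀ᶠ i in cofinite, ‖u i‖ ≤ 1 / 2 :=
    (tendsto_zero_iff_norm_tendsto_zero.1 hu).eventually_le_const one_half_pos
  filter_upwards [hsmall] with i hi
  rw [norm_mul]
  nlinarith [norm_log_one_add_half_le_self hi, norm_nonneg (w i)]

noncomputable def twistLog (N : ℕ) (Z Q : ℂ) (l : ℤ) (m : ℕ) : ℂ :=
  log (1 + Z * Q ^ (l + m * (N : ℤ)))

section TwistTau

variable {N : ℕ} {Z Q : ℂ}

theorem twistLog_succ (l : ℤ) (m : ℕ) :
    twistLog N Z Q l (m + 1) = twistLog N Z Q (l + N) m := by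
  simp only [twistLog]
  push_cast
  ring_nf

theorem summable_twistLog (hN : 1 ≤ N) (hQ0 : Q ≠ 0) (hQ1 : ‖Q‖ < 1) (l : ℤ) :
    Summable fun n => (n + 1) • twistLog N Z Q l (n + 1) := by
  have hq : ‖Q ^ N‖ < 1 := by
    rw [norm_pow]
    exact pow_lt_one₀ (norm_nonneg Q) hQ1 (by omega)
  have hterm : ∀ n : ℕ, Z * Q ^ (l + ((n + 1 : ℕ) : ℤ) * N) = Z * Q ^ l * (Q ^ N) ^ (n + 1) := by
    intro n
    rw [show ((n + 1 : ℕ) : ℤ) * N = ((N * (n + 1) : ℕ) : ℤ) by push_cast; ring,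
      zpow_add₀ hQ0, zpow_natCast, pow_mul, mul_assoc]
  simp only [twistLog, nsmul_eq_mul, hterm]
  apply summable_mul_log_one_add_s17
  · have hgeom : Summable fun n : ℕ => ((n + 1 : ℕ) : ℝ) ^ 1 * ‖Q ^ N‖ ^ (n + 1) :=
      (summable_nat_add_iff (f := fun n : ℕ => (n : ℝ) ^ 1 * ‖Q ^ N‖ ^ n) 1).2
        (summable_pow_mul_geometric_of_norm_lt_one 1 (by rwa [norm_norm]))
    refine (hgeom.mul_left ‖Z * Q ^ l‖).congr fun n => ?_
    simp only [norm_mul, norm_pow, Complex.norm_natCast]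
    ring
  · rw [Nat.cofinite_eq_atTop]
    simpa using ((tendsto_pow_atTop_nhds_zero_of_norm_lt_one hq).comp
      (tendsto_add_atTop_nat 1)).const_mul (Z * Q ^ l)

theorem hasProd_twistTauYNN (hN : 1 ≤ N) (hQ0 : Q ≠ 0) (hQ1 : ‖Q‖ < 1)
    (hZ : ∀ j : ℤ, 1 + Z * Q ^ j ≠ 0) (l : ℤ) :
    HasProd (fun n : ℕ => (1 + Z * Q ^ (l + (n + 1) * (N : ℤ))) ^ (-(n + 1 : ℤ)))
      (exp (-∑' n, (n + 1) • twistLog N Z Q l (n + 1))) := by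
  refine hasProd_zpow_of_hasSum_mul_log (fun n => hZ _) ?_
  refine (summable_twistLog hN hQ0 hQ1 l).hasSum.neg.congr_fun fun n => ?_
  simp only [twistLog, nsmul_eq_mul]
  push_cast
  ring

theorem twistTauYNN_eq_exp (hN : 1 ≤ N) (hQ0 : Q ≠ 0) (hQ1 : ‖Q‖ < 1)
    (hZ : ∀ j : ℤ, 1 + Z * Q ^ j ≠ 0) (l : ℤ) :
    twistTauYNN N Z Q l = exp (-∑' n, (n + 1) • twistLog N Z Q l (n + 1)) :=
  (hasProd_twistTauYNN hN hQ0 hQ1 hZ l).tprod_eq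

theorem twistTauYNN_recursion (hN : 1 ≤ N) (hQ0 : Q ≠ 0) (hQ1 : ‖Q‖ < 1)
    (hZ : ∀ j : ℤ, 1 + Z * Q ^ j ≠ 0) (l : ℤ) :
    (1 + Z * Q ^ l) * (twistTauYNN N Z Q (l + N) * twistTauYNN N Z Q (l - N)) =
      twistTauYNN N Z Q l ^ 2 := by
  have hup : ∀ n : ℕ, twistLog N Z Q (l + N) (n + 1) = twistLog N Z Q l (n + 2) := fun n =>
    (twistLog_succ l (n + 1)).symm
  have hdown : ∀ n : ℕ, twistLog N Z Q (l - N) (n + 1) = twistLog N Z Q l n := fun n => by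
    rw [twistLog_succ, sub_add_cancel]
  have hfirst : 1 + Z * Q ^ l = exp (twistLog N Z Q l 0) := by
    simp [twistLog, exp_log (hZ l)]
  have hsum := summable_twistLog (Z := Z) hN hQ0 hQ1
  have key := tsum_succ_nsmul_add_tsum_succ_nsmul_add_two (b := twistLog N Z Q l)
    (by simpa only [hdown] using hsum (l - N)) (hsum l) (by simpa only [hup] using hsum (l + N))
  simp only [twistTauYNN_eq_exp hN hQ0 hQ1 hZ, hup, hdown, hfirst, ← exp_add, sq]
  congr 1
  rw [two_nsmul] at key
  linear_combination -key

end TwistTau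

/-- The products `σ_l = ∏_{n=1}^∞ (1 + Z·Q^{l+nN})^{−n}` are multipliable, satisfy
`(1 + Z·Q^l)·σ_{l+N}·σ_{l−N} = σ_l²`, and hence the constant-in-`j` family
`σ_{j,l} = σ_l` solves the `Y^{N,N}` bilinear system
`σ_{j,l+N}·σ_{j,l−N} = σ_{j,l}² − Z·Q^l·σ_{j+1,l+N}·σ_{j−1,l−N}`. -/
theorem twistTau_solves_YNN (N : ℕ) (hN : 1 ≤ N) (Z Q : ℂ)
    (hQ0 : 0 < ‖Q‖) (hQ1 : ‖Q‖ < 1)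
    (hZ : ∀ j : ℤ, 1 + Z * Q ^ j ≠ 0)
    (S : ZMod N → ℤ → ℂ) (hS : ∀ (j : ZMod N) (l : ℤ), S j l = twistTauYNN N Z Q l) :
    (∀ l : ℤ, Multipliable fun n : ℕ =>
      (1 + Z * Q ^ (l + (n + 1) * (N : ℤ))) ^ (-(n + 1 : ℤ))) ∧
    (∀ l : ℤ, (1 + Z * Q ^ l) * (twistTauYNN N Z Q (l + N) * twistTauYNN N Z Q (l - N)) =
      (twistTauYNN N Z Q l) ^ 2) ∧
    (∀ (j : ZMod N) (l : ℤ), S j (l + N) * S j (l - N) =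
      (S j l) ^ 2 - Z * Q ^ l * S (j + 1) (l + N) * S (j - 1) (l - N)) := by
  have hQ : Q ≠ 0 := norm_pos_iff.1 hQ0
  refine ⟨fun l => (hasProd_twistTauYNN hN hQ hQ1 hZ l).multipliable,
    twistTauYNN_recursion hN hQ hQ1 hZ, fun j l => ?_⟩
  simp only [hS]
  linear_combination twistTauYNN_recursion hN hQ hQ1 hZ l
end
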